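/- The total domination game on a graph G without isolated vertices is equivalent to the transversal game on the open neighborhood hypergraph H_G of G: a sequence of vertex choices is legal in the total domination game on G if and only if it is legal in the transversal game on H_G, and consequently γ_tg(G) = τ_g(H_G). -/

import Mathlib

open scoped Classical

namespace GameTD

/-- A move `v` is legal w.r.t. selected set `S` in the total domination game:
`v` totally dominates some vertex not yet totally dominated. -/
def Legal {V : Type*} (G : SimpleGraph V) (S : Finset V) (v : V) : Prop :=
  ∃ w, G.Adj v w ∧ ∀ u ∈ S, ¬ G.Adj u w

theorem Legal.not_mem {V : Type*} {G : SimpleGraph V} {S : Finset V} {v : V}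
    (h : Legal G S v) : v ∉ S := by
  rcases h with ⟨w, hadj, hw⟩
  intro hv
  exact hw v hv hadj

/-- The value of the total domination game from position `S`, with `b = true`
meaning Dominator (the minimizer) to move. The game ends when no legal move exists. -/
noncomputable def val {V : Type*} [Fintype V] (G : SimpleGraph V) (b : Bool) (S : Finset V) : ℕ :=
  let L := Finset.univ.filter (fun v => Legal G S v)
  if h : L.Nonempty then
    have hL : L.attach.Nonempty := h.attach
    if b then
      1 + L.attach.inf' hL (fun v => val G false (insert v.1 S))
    else
      1 + L.attach.sup' hL (fun v => val G true (insert v.1 S))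
  else 0
termination_by (Finset.univ \ S).card
decreasing_by
  all_goals {
    have hv : Legal G S v.1 := by
      have := v.2
      exact (Finset.mem_filter.mp v.2).2
    have hvS : v.1 ∉ S := hv.not_mem
    apply Finset.card_lt_card
    constructor
    · intro x hx
      simp only [Finset.mem_sdiff] at hx ⊢
      exact ⟨hx.1, fun hmem => hx.2 (Finset.mem_insert_of_mem hmem)⟩
    · intro hsub
      have : v.1 ∈ Finset.univ \ S := by
        simp [hvS]
      have := hsub this
      simp at this
  }

/-- The game total domination number: Dominator starts from the empty position. -/
noncomputable def gammaTG {V : Type*} [Fintype V] (G : SimpleGraph V) : ℕ :=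
  val G true ∅

end GameTD


open scoped Classical

namespace TransversalGame

/-- A move `v` is legal w.r.t. the selected set `S` in the transversal game on a
hypergraph with edge set `E`: `v` lies in some edge disjoint from `S`. -/
def Legal {V : Type*} (E : Finset (Finset V)) (S : Finset V) (v : V) : Prop :=
  ∃ e ∈ E, v ∈ e ∧ ∀ u ∈ S, u ∉ e

theorem Legal.not_mem {V : Type*} {E : Finset (Finset V)} {S : Finset V} {v : V}
    (h : Legal E S v) : v ∉ S := by
  rcases h with ⟨e, _, hv, hd⟩
  exact fun hvS => hd v hvS hv

/-- Value of the transversal game from position `S`; `b = true` means Edge-hitter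
(the minimizer) to move. The game ends when the selected set is a transversal,
equivalently when no legal move exists. -/
noncomputable def val {V : Type*} [Fintype V] (E : Finset (Finset V)) (b : Bool) (S : Finset V) : ℕ :=
  let L := Finset.univ.filter (fun v => Legal E S v)
  if h : L.Nonempty then
    have hL : L.attach.Nonempty := h.attach
    if b then
      1 + L.attach.inf' hL (fun v => val E false (insert v.1 S))
    else
      1 + L.attach.sup' hL (fun v => val E true (insert v.1 S))
  else 0
termination_by (Finset.univ \ S).card
decreasing_by
  all_goals {
    have hv : Legal E S v.1 := (Finset.mem_filter.mp v.2).2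
    have hvS : v.1 ∉ S := hv.not_mem
    apply Finset.card_lt_card
    constructor
    · intro x hx
      simp only [Finset.mem_sdiff] at hx ⊢
      exact ⟨hx.1, fun hmem => hx.2 (Finset.mem_insert_of_mem hmem)⟩
    · intro hsub
      have hvmem : v.1 ∈ Finset.univ \ S := by simp [hvS]
      have := hsub hvmem
      simp at this
  }

/-- Edge-hitter-start game transversal number starting from `A`. -/
noncomputable def tauG {V : Type*} [Fintype V] (E : Finset (Finset V)) (A : Finset V) : ℕ :=
  val E true A

/-- Staller-start game transversal number starting from `A`. -/
noncomputable def tauG' {V : Type*} [Fintype V] (E : Finset (Finset V)) (A : Finset V) : ℕ :=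
  val E false A

end TransversalGame

/-- The open neighborhood hypergraph of `G`: its edges are the open neighborhoods
of the vertices of `G`. -/
noncomputable def openNeighborhoodHypergraph {V : Type*} [Fintype V]
    (G : SimpleGraph V) : Finset (Finset V) :=
  Finset.univ.image (fun x => G.neighborFinset x)

/-!
A vertex `v` lies in the hyperedge `N(w)` exactly when `v` is adjacent to `w`, and `N(w)` misses
the chosen set `S` exactly when `w` is not yet totally dominated by `S`. So at every position the
two games have the same legal moves, hence the same game tree, and their values agree by
induction on the number of unchosen vertices.
-/

open Finset

section

variable {V : Type*} [Fintype V]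

theorem card_univ_sdiff_insert_lt {S : Finset V} {v : V} (hv : v ∉ S) :
    (univ \ insert v S).card < (univ \ S).card := by
  simpa only [compl_eq_univ_sdiff] using card_lt_card (compl_ssubset_compl.2 (ssubset_insert hv))

theorem GameTD.legal_eq_transversalGame_legal (G : SimpleGraph V) (S : Finset V) :
    GameTD.Legal G S = TransversalGame.Legal (openNeighborhoodHypergraph G) S := by
  ext v
  simp only [GameTD.Legal, TransversalGame.Legal, openNeighborhoodHypergraph, mem_image,
    mem_univ, true_and, exists_exists_eq_and, SimpleGraph.mem_neighborFinset]
  exact exists_congr fun w => and_congr (G.adj_comm v w) <| forall₂_congr fun u _ => by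
    rw [G.adj_comm]

theorem GameTD.val_eq_transversalGame_val (G : SimpleGraph V) (b : Bool) (S : Finset V) :
    GameTD.val G b S = TransversalGame.val (openNeighborhoodHypergraph G) b S := by
  -- Rewriting the predicate itself, not pointwise, also rewrites the proofs that the
  -- `attach`-ed move sets are nonempty, so the dependent `if` stays well-typed.
  rw [GameTD.val, TransversalGame.val, GameTD.legal_eq_transversalGame_legal]
  dsimp only
  split_ifs
  · congr 1
    refine inf'_congr _ rfl fun v _ => ?_
    have hv := (mem_filter.mp v.2).2.not_mem
    exact GameTD.val_eq_transversalGame_val G false (insert v.1 S)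
  · congr 1
    refine sup'_congr _ rfl fun v _ => ?_
    have hv := (mem_filter.mp v.2).2.not_mem
    exact GameTD.val_eq_transversalGame_val G true (insert v.1 S)
  · rfl
termination_by (univ \ S).card
decreasing_by all_goals exact card_univ_sdiff_insert_lt hv

end

theorem totalDominationGame_eq_transversalGame_general {V : Type*} [Fintype V]
    (G : SimpleGraph V) :
    (∀ (S : Finset V) (v : V),
      GameTD.Legal G S v ↔ TransversalGame.Legal (openNeighborhoodHypergraph G) S v) ∧
    GameTD.gammaTG G = TransversalGame.tauG (openNeighborhoodHypergraph G) ∅ :=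
  ⟨fun S v => iff_of_eq (congrFun (GameTD.legal_eq_transversalGame_legal G S) v),
    GameTD.val_eq_transversalGame_val G true ∅⟩

/-- The total domination game on an isolate-free graph `G` is the transversal game
on the open neighborhood hypergraph `H_G`: a move is legal in one game iff it is
legal in the other (from any position), and γ_tg(G) = τ_g(H_G). -/
theorem totalDominationGame_eq_transversalGame {V : Type*} [Fintype V]
    (G : SimpleGraph V) (h_no_isolated_vertex : ∀ v : V, ∃ w, G.Adj v w) :
    (∀ (S : Finset V) (v : V),
      GameTD.Legal G S v ↔ TransversalGame.Legal (openNeighborhoodHypergraph G) S v) ∧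
    GameTD.gammaTG G = TransversalGame.tauG (openNeighborhoodHypergraph G) ∅ :=
  totalDominationGame_eq_transversalGame_general G
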